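/- Every dark ceer is co-ceer-resistant: if X is a ceer with infinitely many classes such that Id is not computably reducible to X, and C is any Π⁰₁ equivalence relation with infinitely many classes, then there exist x, y with x X y but not x C y. -/

import Mathlib

/-- `f` is a computable reduction from `R` to `S`. -/
def CReduction (f : ℕ → ℕ) (R S : ℕ → ℕ → Prop) : Prop :=
  Computable f ∧ ∀ x y, R x y ↔ S (f x) (f y)

/-- `R` is computably reducible to `S`. -/
def Reduces (R S : ℕ → ℕ → Prop) : Prop := ∃ f, CReduction f R S

/-- A ceer: a computably enumerable equivalence relation on ℕ. -/
def Ceer (R : ℕ → ℕ → Prop) : Prop :=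
  Equivalence R ∧ REPred fun p : ℕ × ℕ => R p.1 p.2

/-- `R` is self-full: every computable self-reduction has range meeting every class. -/
def SelfFull (R : ℕ → ℕ → Prop) : Prop :=
  ∀ f, CReduction f R R → ∀ y, ∃ x, R (f x) y

/-- Uniform join `R ⊕ S`: evens code `R`, odds code `S`. -/
def join (R S : ℕ → ℕ → Prop) : ℕ → ℕ → Prop :=
  fun a b => (∃ x y, a = 2*x ∧ b = 2*y ∧ R x y) ∨
             (∃ x y, a = 2*x+1 ∧ b = 2*y+1 ∧ S x y)

/-- A Π⁰₁ relation: the complement is c.e. -/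
def Pi01 (C : ℕ → ℕ → Prop) : Prop :=
  REPred fun p : ℕ × ℕ => ¬ C p.1 p.2

/-- `R` has infinitely many equivalence classes. -/
def InfiniteClasses (R : ℕ → ℕ → Prop) : Prop :=
  ∀ l : List ℕ, ∃ x, ∀ y ∈ l, ¬ R x y

/-- `R` has only finitely many equivalence classes. -/
def FiniteClasses (R : ℕ → ℕ → Prop) : Prop :=
  ∃ l : List ℕ, ∀ x, ∃ y ∈ l, R x y

/-- `X` is co-ceer-resistant. -/
def CoCeerResistant (X : ℕ → ℕ → Prop) : Prop :=
  ∀ C : ℕ → ℕ → Prop, Equivalence C → Pi01 C → InfiniteClasses C →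
    ∃ x y, X x y ∧ ¬ C x y

/-- `X` is hereditarily self-full. -/
def HSF (X : ℕ → ℕ → Prop) : Prop :=
  ∀ Y, Ceer Y → SelfFull Y → SelfFull (join X Y)

/-- `IdN n` is a ceer with exactly `n + 1` classes; so `IdN (n-1)` plays the role of `Idₙ` for `n ≥ 1`. -/
def IdN (n : ℕ) : ℕ → ℕ → Prop := fun x y => min x n = min y n

/-- A universal ceer: every ceer reduces to it. -/
def Universal (U : ℕ → ℕ → Prop) : Prop := ∀ R, Ceer R → Reduces R U

/-- The Π⁰₁ equivalence relation `∼ᶠ` induced by a self-reduction `f` of a uniform join. -/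
def simF (f : ℕ → ℕ) : ℕ → ℕ → Prop :=
  fun n m => ∀ k, (Even (f^[k] (2*n)) ↔ Even (f^[k] (2*m)))

/-- A sequence is eventually periodic. -/
def EventuallyPeriodic (τ : ℕ → Bool) : Prop :=
  ∃ N p, 0 < p ∧ ∀ k, N ≤ k → τ (k + p) = τ k

/-!
If `X ⊆ C`, a computable transversal of `C` is also one of `X`, i.e. a reduction of `Id` to `X`.
Such a transversal exists because the complement of `C` is c.e. and `C` has infinitely many
classes: given the elements chosen so far, search for a new element together with a stage by
which its inequivalence to each of them has been enumerated.
-/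

open Nat.Partrec.Code Filter Encodable

theorem REPred.exists_primrecRel_stages {α : Type*} [Primcodable α] {p : α → Prop}
    (hp : REPred p) :
    ∃ q : α → ℕ → Prop, PrimrecRel q ∧ (∀ a, Monotone (q a)) ∧
      ∀ a, p a ↔ ∃ s, q a s := by
  obtain ⟨c, hc⟩ := exists_code.1 hp
  have hdom : ∀ a, p a ↔ (eval c (encode a)).Dom := by
    intro a
    simp [hc, encodek, Part.assert]
  refine ⟨fun a s => (evaln s c (encode a)).isSome, ?_, ?_, ?_⟩
  · refine Primrec₂.primrecRel ?_
    exact (Primrec.option_isSome.comp (primrec_evaln.comp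
      ((Primrec.snd.pair (Primrec.const c)).pair (Primrec.encode.comp Primrec.fst)))).of_eq
      fun _ => by simp
  · intro a s t hst hs
    obtain ⟨v, hv⟩ := Option.isSome_iff_exists.1 hs
    exact Option.isSome_iff_exists.2 ⟨v, evaln_mono hst hv⟩
  · intro a
    rw [hdom, Part.dom_iff_mem]
    simp only [evaln_complete, Option.isSome_iff_exists]
    exact ⟨fun ⟨v, k, hk⟩ => ⟨k, v, hk⟩, fun ⟨k, v, hk⟩ => ⟨v, k, hk⟩⟩

theorem REPred.of_exists_primrecRel {α : Type*} [Primcodable α] {q : α → ℕ → Prop}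
    (hq : PrimrecRel q) : REPred fun a => ∃ s, q a s := by
  classical
  refine (Partrec.rfind (hq.decide.to_comp.partrec.to₂ (σ := Bool))).dom_re.of_eq fun a => ?_
  exact ⟨fun ⟨s, hs⟩ => ⟨s, by simpa using hs.symm⟩,
    fun ⟨s, hs⟩ => ⟨s, by simpa using hs⟩⟩

theorem REPred.forall_mem_list {α β : Type*} [Primcodable α] [Primcodable β]
    {R : α → β → Prop} (hR : REPred fun p : α × β => R p.1 p.2) :
    REPred fun p : List α × β => ∀ a ∈ p.1, R a p.2 := by
  obtain ⟨q, hq, hmono, hRq⟩ := hR.exists_primrecRel_stages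
  have hQ : PrimrecRel fun (p : List α × β) s => ∀ a ∈ p.1, q (a, p.2) s := by
    have h := PrimrecRel.forall_mem_list (R := fun a (bs : β × ℕ) => q (a, bs.1) bs.2)
      (hq.comp (Primrec.fst.pair (Primrec.fst.comp Primrec.snd)) (Primrec.snd.comp Primrec.snd))
    exact h.comp (Primrec.fst.comp Primrec.fst) ((Primrec.snd.comp Primrec.fst).pair Primrec.snd)
  refine (REPred.of_exists_primrecRel hQ).of_eq fun ⟨l, b⟩ => ?_
  constructor
  · rintro ⟨s, hs⟩ a ha
    exact (hRq (a, b)).2 ⟨s, hs a ha⟩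
  · intro h
    have hev : ∀ a ∈ {a | a ∈ l}, ∀ᶠ s in atTop, q (a, b) s := fun a ha =>
      let ⟨s, hs⟩ := (hRq (a, b)).1 (h a ha)
      eventually_atTop.2 ⟨s, fun _ hst => hmono _ hst hs⟩
    exact ((eventually_all_finite l.finite_toSet).2 hev).exists

theorem REPred.exists_computable_choice {α : Type*} [Primcodable α] {R : α → ℕ → Prop}
    (hR : REPred fun p : α × ℕ => R p.1 p.2) (htot : ∀ a, ∃ n, R a n) :
    ∃ f : α → ℕ, Computable f ∧ ∀ a, R a (f a) := by
  classical
  obtain ⟨q, hq, -, hRq⟩ := hR.exists_primrecRel_stages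
  -- `t` codes a pair `⟨n, s⟩` such that `R a n` is confirmed by stage `s`
  have hwit : ∀ a, ∃ t : ℕ, q (a, t.unpair.1) t.unpair.2 := fun a =>
    let ⟨n, hn⟩ := htot a
    let ⟨s, hs⟩ := (hRq (a, n)).1 hn
    ⟨Nat.pair n s, by simpa using hs⟩
  have hsearch : ComputablePred fun p : α × ℕ => q (p.1, p.2.unpair.1) p.2.unpair.2 :=
    (hq.comp (Primrec.fst.pair (Primrec.fst.comp (Primrec.unpair.comp Primrec.snd)))
      (Primrec.snd.comp (Primrec.unpair.comp Primrec.snd))).computablePred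
  refine ⟨fun a => (Nat.find (hwit a)).unpair.1,
    Computable.fst.comp (Computable.unpair.comp (Computable.find hsearch hwit)), fun a => ?_⟩
  exact (hRq (a, _)).2 ⟨_, Nat.find_spec (hwit a)⟩

theorem exists_computable_eq_apply_map_range {σ : Type*} [Primcodable σ] {g : List σ → σ}
    (hg : Computable g) :
    ∃ f : ℕ → σ, Computable f ∧ ∀ n, f n = g ((List.range n).map f) := by
  let L : ℕ → List σ := fun n => Nat.rec [] (fun _ l => l ++ [g l]) n
  have hL : Computable L :=
    Computable.nat_rec Computable.id (Computable.const [])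
      (Computable.list_concat.comp (Computable.snd.comp Computable.snd)
        (hg.comp (Computable.snd.comp Computable.snd))).to₂
  refine ⟨fun n => g (L n), hg.comp hL, fun n => congrArg g ?_⟩
  induction n with
  | zero => rfl
  | succ n ih => simp [L, List.range_succ, ← ih]

theorem Pi01.exists_computable_transversal {C : ℕ → ℕ → Prop} (hC : Pi01 C)
    (hinf : InfiniteClasses C) :
    ∃ f : ℕ → ℕ, Computable f ∧ ∀ m n, m < n → ¬ C (f n) (f m) := by
  have hswap : REPred fun p : ℕ × ℕ => ¬ C p.2 p.1 :=
    Partrec.comp hC (Computable.snd.pair Computable.fst)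
  obtain ⟨next, hnext, hnext_avoids⟩ :=
    (hswap.forall_mem_list (R := fun y x => ¬ C x y)).exists_computable_choice hinf
  obtain ⟨f, hf, hf_eq⟩ := exists_computable_eq_apply_map_range hnext
  refine ⟨f, hf, fun m n hmn => ?_⟩
  rw [hf_eq n]
  exact hnext_avoids _ _ (List.mem_map_of_mem (List.mem_range.2 hmn))

theorem reduces_eq_of_forall_lt_not_rel {X : ℕ → ℕ → Prop} (hX : Equivalence X)
    {f : ℕ → ℕ} (hf : Computable f) (hsep : ∀ m n, m < n → ¬ X (f n) (f m)) :
    Reduces (fun x y => x = y) X := by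
  refine ⟨f, hf, fun x y => ⟨fun h => h ▸ hX.refl _, fun hxy => ?_⟩⟩
  rcases lt_trichotomy x y with h | h | h
  · exact absurd (hX.symm hxy) (hsep x y h)
  · exact h
  · exact absurd hxy (hsep y x h)

theorem stmt2_general (X : ℕ → ℕ → Prop) (hX : Ceer X)
    (hdark : ¬ Reduces (fun x y => x = y) X)
    (C : ℕ → ℕ → Prop) (hPi : Pi01 C)
    (hCInf : InfiniteClasses C) :
    ∃ x y, X x y ∧ ¬ C x y := by
  by_contra! hXC
  obtain ⟨f, hf, hsep⟩ := hPi.exists_computable_transversal hCInf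
  exact hdark <| reduces_eq_of_forall_lt_not_rel hX.1 hf fun m n hmn hXmn =>
    hsep m n hmn (hXC _ _ hXmn)

/-- Every dark ceer is co-ceer-resistant. -/
theorem stmt2 (X : ℕ → ℕ → Prop) (hX : Ceer X) (hInf : InfiniteClasses X)
    (hdark : ¬ Reduces (fun x y => x = y) X)
    (C : ℕ → ℕ → Prop) (hC : Equivalence C) (hPi : Pi01 C)
    (hCInf : InfiniteClasses C) :
    ∃ x y, X x y ∧ ¬ C x y :=
  stmt2_general X hX hdark C hPi hCInf
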